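/- Let Λ be an order in an étale algebra, 𝔓 a maximal ideal of Λ with residue field of cardinality q. A one-dimensional Λ/𝔓-subspace V = ⟨x⟩ of the Λ/𝔓-vector space (𝔓 : 𝔓)/Λ corresponds to an order (i.e., its preimage in (𝔓 : 𝔓) is multiplicatively closed) if and only if x² ∈ V. -/

import Mathlib

/-- The preimage in `A` of the line `⟨x⟩` in `(𝔓 : 𝔓)/Λ`: the `Λ`-module
`Λ·x + Λ`. -/
def lineOver {R A : Type*} [CommRing R] [CommRing A] [Algebra R A]
    (Λ : Subalgebra R A) (x : A) : Set A :=
  {y : A | ∃ a l : Λ, y = (a : A) * x + (l : A)}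

section lineOver

variable {R A : Type*} [CommRing R] [CommRing A] [Algebra R A] {Λ : Subalgebra R A} {x : A}

theorem self_mem_lineOver : x ∈ lineOver Λ x :=
  ⟨1, 0, by simp⟩

/-- `(a₁x + l₁)(a₂x + l₂) = a₁a₂·x² + (a₁l₂ + a₂l₁)·x + l₁l₂`, so only `x²` can leave `Λx + Λ`. -/
theorem mul_mem_lineOver_of_mul_self_mem (hxx : x * x ∈ lineOver Λ x) {y z : A}
    (hy : y ∈ lineOver Λ x) (hz : z ∈ lineOver Λ x) : y * z ∈ lineOver Λ x := by
  obtain ⟨a, l, hal⟩ := hxx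
  obtain ⟨a₁, l₁, rfl⟩ := hy
  obtain ⟨a₂, l₂, rfl⟩ := hz
  refine ⟨a₁ * a₂ * a + a₁ * l₂ + a₂ * l₁, a₁ * a₂ * l + l₁ * l₂, ?_⟩
  push_cast
  linear_combination (a₁ : A) * (a₂ : A) * hal

end lineOver

theorem statement13 {R : Type*} {A : Type u} [CommRing R] [CommRing A] [Algebra R A]
    (Λ : Subalgebra R A)
    (x : A) :
    (∀ y ∈ lineOver Λ x, ∀ z ∈ lineOver Λ x, y * z ∈ lineOver Λ x) ↔
      x * x ∈ lineOver Λ x :=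
  ⟨fun h ↦ h x self_mem_lineOver x self_mem_lineOver,
    fun hxx _ hy _ hz ↦ mul_mem_lineOver_of_mul_self_mem hxx hy hz⟩
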